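/- Let G be a K_{2,3}-induced-minor-free graph, r a vertex, and H the output of the cluster-rewiring algorithm on (G, r). For any isometric path P of G with endpoint r and any two vertices x, y on P, dist_H(x,y) ≤ dist_G(x,y) + 20. -/
import Mathlib


open SimpleGraph

namespace Paper

variable {V : Type}

/-- `u` and `v` are connected in `G` after deleting the vertex set `B`. -/
def ConnOutside (G : SimpleGraph V) (B : Set V) (u v : V) : Prop :=
  ∃ (hu : u ∈ Bᶜ) (hv : v ∈ Bᶜ), (G.induce Bᶜ).Reachable ⟨u, hu⟩ ⟨v, hv⟩

/-- `C` is an `(a,b)`-cutset of `G`. -/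
def IsSep (G : SimpleGraph V) (a b : V) (C : Set V) : Prop :=
  a ∉ C ∧ b ∉ C ∧ ¬ ConnOutside G C a b

/-- `C` is a minimal `(a,b)`-cutset of `G`. -/
def IsMinSep (G : SimpleGraph V) (a b : V) (C : Set V) : Prop :=
  IsSep G a b C ∧ ∀ C' ⊂ C, ¬ IsSep G a b C'

/-- `S` is a cluster of the layering partition of `G` rooted at `r`, at level `k`:
a maximal set of vertices at distance exactly `k` from `r`, any two of which are
connected in `G` minus the ball of radius `k-1` around `r`. -/
def IsCluster (G : SimpleGraph V) (r : V) (k : ℕ) (S : Set V) : Prop :=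
  S.Nonempty ∧ (∀ v ∈ S, G.dist r v = k) ∧
  (∀ u ∈ S, ∀ v ∈ S, ConnOutside G {w | G.dist r w < k} u v) ∧
  ∀ S', S ⊆ S' → (∀ v ∈ S', G.dist r v = k) →
    (∀ u ∈ S', ∀ v ∈ S', ConnOutside G {w | G.dist r w < k} u v) → S' ⊆ S

/-- The parent set of a cluster `S` at level `k`: vertices at distance `k-1` from `r`
adjacent to some vertex of `S`. -/
def parentSet (G : SimpleGraph V) (r : V) (k : ℕ) (S : Set V) : Set V :=
  {v | G.dist r v = k - 1 ∧ ∃ u ∈ S, G.Adj v u}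

/-- `G` has no `K_{2,3}` induced minor. -/
def K23Free (G : SimpleGraph V) : Prop :=
  ¬ ∃ φ : Fin 2 ⊕ Fin 3 → Set V,
      (∀ w, (φ w).Nonempty) ∧ (∀ w, (G.induce (φ w)).Connected) ∧
      (Pairwise fun a b => Disjoint (φ a) (φ b)) ∧
      (∀ a b, a ≠ b →
        ((completeBipartiteGraph (Fin 2) (Fin 3)).Adj a b ↔
          ∃ u ∈ φ a, ∃ v ∈ φ b, G.Adj u v))

/-- `G` contains a theta as an induced subgraph. -/
def HasTheta (G : SimpleGraph V) : Prop :=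
  ∃ (a b : V) (p₁ p₂ p₃ : G.Walk a b),
    p₁.IsPath ∧ p₂.IsPath ∧ p₃.IsPath ∧
    2 ≤ p₁.length ∧ 2 ≤ p₂.length ∧ 2 ≤ p₃.length ∧
    (∀ v, v ∈ p₁.support → v ∈ p₂.support → v = a ∨ v = b) ∧
    (∀ v, v ∈ p₁.support → v ∈ p₃.support → v = a ∨ v = b) ∧
    (∀ v, v ∈ p₂.support → v ∈ p₃.support → v = a ∨ v = b) ∧
    ∀ u v, u ∈ p₁.support ++ p₂.support ++ p₃.support →
      v ∈ p₁.support ++ p₂.support ++ p₃.support →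
      (G.Adj u v ↔ s(u, v) ∈ p₁.edges ++ p₂.edges ++ p₃.edges)

/-- `G` contains a pyramid as an induced subgraph. -/
def HasPyramid (G : SimpleGraph V) : Prop :=
  ∃ (a b₁ b₂ b₃ : V) (p₁ : G.Walk a b₁) (p₂ : G.Walk a b₂) (p₃ : G.Walk a b₃),
    p₁.IsPath ∧ p₂.IsPath ∧ p₃.IsPath ∧
    G.Adj b₁ b₂ ∧ G.Adj b₂ b₃ ∧ G.Adj b₁ b₃ ∧
    1 ≤ p₁.length ∧ 1 ≤ p₂.length ∧ 1 ≤ p₃.length ∧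
    ((2 ≤ p₁.length ∧ 2 ≤ p₂.length) ∨ (2 ≤ p₁.length ∧ 2 ≤ p₃.length) ∨
      (2 ≤ p₂.length ∧ 2 ≤ p₃.length)) ∧
    (∀ v, v ∈ p₁.support → v ∈ p₂.support → v = a) ∧
    (∀ v, v ∈ p₁.support → v ∈ p₃.support → v = a) ∧
    (∀ v, v ∈ p₂.support → v ∈ p₃.support → v = a) ∧
    ∀ u v, u ∈ p₁.support ++ p₂.support ++ p₃.support →
      v ∈ p₁.support ++ p₂.support ++ p₃.support →
      (G.Adj u v ↔ s(u, v) ∈ p₁.edges ++ p₂.edges ++ p₃.edges ∨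
        s(u, v) ∈ [s(b₁, b₂), s(b₂, b₃), s(b₁, b₃)])

/-- The common part of the definition of an (induced) prism in `G`. -/
def PrismWitness (G : SimpleGraph V) (a₁ a₂ a₃ b₁ b₂ b₃ : V)
    (p₁ : G.Walk a₁ b₁) (p₂ : G.Walk a₂ b₂) (p₃ : G.Walk a₃ b₃) : Prop :=
  p₁.IsPath ∧ p₂.IsPath ∧ p₃.IsPath ∧
  G.Adj a₁ a₂ ∧ G.Adj a₂ a₃ ∧ G.Adj a₁ a₃ ∧
  G.Adj b₁ b₂ ∧ G.Adj b₂ b₃ ∧ G.Adj b₁ b₃ ∧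
  (∀ v, v ∈ p₁.support → v ∉ p₂.support) ∧
  (∀ v, v ∈ p₁.support → v ∉ p₃.support) ∧
  (∀ v, v ∈ p₂.support → v ∉ p₃.support) ∧
  ∀ u v, u ∈ p₁.support ++ p₂.support ++ p₃.support →
    v ∈ p₁.support ++ p₂.support ++ p₃.support →
    (G.Adj u v ↔ s(u, v) ∈ p₁.edges ++ p₂.edges ++ p₃.edges ∨
      s(u, v) ∈ [s(a₁, a₂), s(a₂, a₃), s(a₁, a₃), s(b₁, b₂), s(b₂, b₃), s(b₁, b₃)])

/-- `G` contains a prism as an induced subgraph. -/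
def HasPrism (G : SimpleGraph V) : Prop :=
  ∃ (a₁ a₂ a₃ b₁ b₂ b₃ : V) (p₁ : G.Walk a₁ b₁) (p₂ : G.Walk a₂ b₂) (p₃ : G.Walk a₃ b₃),
    PrismWitness G a₁ a₂ a₃ b₁ b₂ b₃ p₁ p₂ p₃

/-- `G` contains a long prism (at least one path of length ≥ 2) as an induced subgraph. -/
def HasLongPrism (G : SimpleGraph V) : Prop :=
  ∃ (a₁ a₂ a₃ b₁ b₂ b₃ : V) (p₁ : G.Walk a₁ b₁) (p₂ : G.Walk a₂ b₂) (p₃ : G.Walk a₃ b₃),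
    PrismWitness G a₁ a₂ a₃ b₁ b₂ b₃ p₁ p₂ p₃ ∧
    (2 ≤ p₁.length ∨ 2 ≤ p₂.length ∨ 2 ≤ p₃.length)

/-- `c` is an induced cycle (hole when length ≥ 4) of `G`. -/
def IsInducedCycle (G : SimpleGraph V) {v : V} (c : G.Walk v v) : Prop :=
  c.IsCycle ∧ ∀ x ∈ c.support, ∀ y ∈ c.support, (G.Adj x y ↔ s(x, y) ∈ c.edges)

/-- `p` is an induced path of `G`. -/
def IsInducedPath (G : SimpleGraph V) {a b : V} (p : G.Walk a b) : Prop :=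
  p.IsPath ∧ ∀ u ∈ p.support, ∀ v ∈ p.support, (G.Adj u v ↔ s(u, v) ∈ p.edges)

/-- `G` contains a wheel: a hole together with a vertex having ≥ 3 neighbours on it. -/
def HasWheel (G : SimpleGraph V) : Prop :=
  ∃ (v x : V) (c : G.Walk v v), IsInducedCycle G c ∧ 4 ≤ c.length ∧ x ∉ c.support ∧
    ∃ y₁ y₂ y₃, y₁ ≠ y₂ ∧ y₁ ≠ y₃ ∧ y₂ ≠ y₃ ∧
      y₁ ∈ c.support ∧ y₂ ∈ c.support ∧ y₃ ∈ c.support ∧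
      G.Adj x y₁ ∧ G.Adj x y₂ ∧ G.Adj x y₃

/-- A sector of a wheel with rim `c` and centre `x`: a path contained in the rim whose
end-vertices are neighbours of `x` and whose internal vertices are not. -/
def IsSector (G : SimpleGraph V) {v : V} (c : G.Walk v v) (x : V) {s t : V}
    (q : G.Walk s t) : Prop :=
  q.IsPath ∧ (∀ e ∈ q.edges, e ∈ c.edges) ∧ G.Adj x s ∧ G.Adj x t ∧
  ∀ w ∈ q.support, w ≠ s → w ≠ t → ¬ G.Adj x w

/-- `G` contains a broken wheel: a wheel with at least two sectors of length ≥ 2. -/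
def HasBrokenWheel (G : SimpleGraph V) : Prop :=
  ∃ (v x : V) (c : G.Walk v v), IsInducedCycle G c ∧ 4 ≤ c.length ∧ x ∉ c.support ∧
    (∃ y₁ y₂ y₃, y₁ ≠ y₂ ∧ y₁ ≠ y₃ ∧ y₂ ≠ y₃ ∧
      y₁ ∈ c.support ∧ y₂ ∈ c.support ∧ y₃ ∈ c.support ∧
      G.Adj x y₁ ∧ G.Adj x y₂ ∧ G.Adj x y₃) ∧
    ∃ (s₁ t₁ s₂ t₂ : V) (q₁ : G.Walk s₁ t₁) (q₂ : G.Walk s₂ t₂),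
      IsSector G c x q₁ ∧ IsSector G c x q₂ ∧ 2 ≤ q₁.length ∧ 2 ≤ q₂.length ∧
      ∀ w, w ∈ q₁.support → w ∈ q₂.support → G.Adj x w

/-- A universally signable graph: no theta, pyramid, prism, or wheel induced subgraph. -/
def UniversallySignable (G : SimpleGraph V) : Prop :=
  ¬ HasTheta G ∧ ¬ HasPyramid G ∧ ¬ HasPrism G ∧ ¬ HasWheel G

/-- `G` has tree-width at most `w`. -/
def TreewidthLe (G : SimpleGraph V) (w : ℕ) : Prop :=
  ∃ (ι : Type) (T : SimpleGraph ι) (bag : ι → Set V),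
    T.IsTree ∧
    (∀ v, ∃ i, v ∈ bag i) ∧
    (∀ u v, G.Adj u v → ∃ i, u ∈ bag i ∧ v ∈ bag i) ∧
    (∀ v, (T.induce {i | v ∈ bag i}).Connected) ∧
    (∀ i, (bag i).ncard ≤ w + 1)

/-- The strong isometric path complexity of `G` is at most `s`: for every vertex `v`,
every isometric path of `G` can be vertex-covered by at most `s` isometric paths
rooted at `v`. -/
def SipcoLe (G : SimpleGraph V) (s : ℕ) : Prop :=
  ∀ v : V, ∀ ⦃x y : V⦄ (p : G.Walk x y), p.length = G.dist x y →
    ∃ n : ℕ, n ≤ s ∧ ∃ (e : Fin n → V) (Q : ∀ i, G.Walk v (e i)),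
      (∀ i, (Q i).length = G.dist v (e i)) ∧
      ∀ z ∈ p.support, ∃ i, z ∈ (Q i).support

/-- The strong isometric path complexity of `G`. -/
noncomputable def sipco (G : SimpleGraph V) : ℕ := sInf {s | SipcoLe G s}

/-- `P` induces exactly two connected components `C₁`, `C₂` in `G`. -/
def SplitsTwo (G : SimpleGraph V) (P C₁ C₂ : Set V) : Prop :=
  C₁ ∪ C₂ = P ∧ Disjoint C₁ C₂ ∧ C₁.Nonempty ∧ C₂.Nonempty ∧
  (G.induce C₁).Connected ∧ (G.induce C₂).Connected ∧
  ∀ u ∈ C₁, ∀ v ∈ C₂, ¬ G.Adj u v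

/-- The star of edges joining each vertex of `D` to `w`. -/
def starEdges (w : V) (D : Set V) : Set (Sym2 V) := {e | ∃ v ∈ D, e = s(v, w)}

/-- Vertices of `S` with a `G`-neighbour in `C`. -/
def Dset (G : SimpleGraph V) (S C : Set V) : Set V := {u ∈ S | ∃ v ∈ C, G.Adj u v}

/-- Admissible edge sets `E` produced by Algorithm 1 when processing a cluster `S`
with parent set `P`. -/
def ClusterEdges (G : SimpleGraph V) (S P : Set V) (E : Set (Sym2 V)) : Prop :=
  ((G.induce P).Connected ∧ ∃ w ∈ P, E = starEdges w S) ∨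
  ∃ C₁ C₂, SplitsTwo G P C₁ C₂ ∧ ∃ w₁ ∈ C₁, ∃ w₂ ∈ C₂,
    ((Dset G S C₁ ∩ Dset G S C₂ = ∅ ∧
       ((¬ (∃ u ∈ Dset G S C₁, ∃ v ∈ Dset G S C₂, G.Adj u v) ∧
          E = starEdges w₁ (Dset G S C₁) ∪ starEdges w₂ (Dset G S C₂)) ∨
        (∃ u ∈ Dset G S C₁, ∃ v ∈ Dset G S C₂, G.Adj u v ∧
          E = starEdges w₁ (Dset G S C₁) ∪ starEdges w₂ (Dset G S C₂) ∪ {s(u, v)})))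
     ∨
     ((Dset G S C₁ ∩ Dset G S C₂).Nonempty ∧
       ∃ u ∈ Dset G S C₁ ∩ Dset G S C₂,
         E = starEdges w₁ (Dset G S C₁) ∪
             starEdges w₂ (Dset G S C₂ \ Dset G S C₁) ∪ {s(u, w₂)}))

/-- `H` is a possible output of the cluster-rewiring algorithm (Algorithm 1) on `(G, r)`. -/
def IsAlgoOutput (G : SimpleGraph V) (r : V) (H : SimpleGraph V) : Prop :=
  ∃ f : Set V → Set (Sym2 V),
    (∀ S k, 1 ≤ k → IsCluster G r k S → ClusterEdges G S (parentSet G r k S) (f S)) ∧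
    H.edgeSet = ⋃ S ∈ {S : Set V | ∃ k, 1 ≤ k ∧ IsCluster G r k S}, f S

/-- The type of clusters of the layering partition of `G` rooted at `r`. -/
def ClusterType (G : SimpleGraph V) (r : V) : Type := {S : Set V // ∃ k, IsCluster G r k S}

/-- The layering tree: clusters, adjacent when `G` has an edge between them. -/
def layeringTree (G : SimpleGraph V) (r : V) : SimpleGraph (ClusterType G r) :=
  SimpleGraph.fromRel (fun S T => ∃ u ∈ S.1, ∃ v ∈ T.1, G.Adj u v)

/-- `A` is a connected component of `G - C`. -/
def IsCompOf (G : SimpleGraph V) (C A : Set V) : Prop :=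
  A.Nonempty ∧ Disjoint A C ∧ (G.induce A).Connected ∧
  ∀ u ∈ A, ∀ v, v ∉ A → v ∉ C → ¬ G.Adj u v


section AuxCO

variable {G : SimpleGraph V}

lemma connOutside_refl {B : Set V} {u : V} (hu : u ∈ Bᶜ) : ConnOutside G B u u :=
  ⟨hu, hu, Reachable.refl _⟩

lemma connOutside_symm {B : Set V} {u v : V} (h : ConnOutside G B u v) :
    ConnOutside G B v u := by
  obtain ⟨hu, hv, hr⟩ := h
  exact ⟨hv, hu, hr.symm⟩

lemma connOutside_trans {B : Set V} {u v w : V} (h1 : ConnOutside G B u v)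
    (h2 : ConnOutside G B v w) : ConnOutside G B u w := by
  obtain ⟨hu, hv, hr1⟩ := h1
  obtain ⟨hv', hw, hr2⟩ := h2
  exact ⟨hu, hw, hr1.trans hr2⟩

lemma connOutside_mono {B B' : Set V} (hBB : B' ⊆ B) {u v : V}
    (h : ConnOutside G B u v) : ConnOutside G B' u v := by
  obtain ⟨hu, hv, hr⟩ := h
  have hsub : Bᶜ ⊆ B'ᶜ := Set.compl_subset_compl.mpr hBB
  refine ⟨hsub hu, hsub hv, ?_⟩
  let F : G.induce Bᶜ →g G.induce B'ᶜ :=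
    { toFun := fun a => ⟨a.1, hsub a.2⟩,
      map_rel' := by intro a b hab; exact hab }
  exact hr.map F

lemma connOutside_adj_right {B : Set V} {u v w : V} (h : ConnOutside G B u v)
    (hadj : G.Adj v w) (hw : w ∈ Bᶜ) : ConnOutside G B u w := by
  obtain ⟨hu, hv, hr⟩ := h
  refine ⟨hu, hw, hr.trans (Adj.reachable ?_)⟩
  show (G.induce Bᶜ).Adj ⟨v, hv⟩ ⟨w, hw⟩
  exact hadj

end AuxCO

section Dist

variable {G : SimpleGraph V} {u v : V}

lemma dist_le_one_of_adj (h : G.Adj u v) : G.dist u v ≤ 1 := by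
  simpa using SimpleGraph.dist_le (Walk.cons h Walk.nil)

lemma dist_getVert_le (hG : G.Connected) (p : G.Walk u v) {n : ℕ} (hn : n ≤ p.length) :
    G.dist u (p.getVert n) ≤ n := by
  induction n with
  | zero => simp [p.getVert_zero]
  | succ m ih =>
    have h1 : G.dist u (p.getVert m) ≤ m := ih (by omega)
    have h2 : G.Adj (p.getVert m) (p.getVert (m + 1)) := p.adj_getVert_succ (by omega)
    have h3 := hG.dist_triangle (u := u) (v := p.getVert m) (w := p.getVert (m + 1))
    have h4 := dist_le_one_of_adj h2
    omega

lemma dist_getVert_end_le (p : G.Walk u v) {n : ℕ} :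
    G.dist (p.getVert n) v ≤ p.length - n := by
  induction p generalizing n with
  | nil => simp [Walk.getVert]
  | @cons a b c h q ih =>
    cases n with
    | zero =>
      simpa using SimpleGraph.dist_le (Walk.cons h q)
    | succ m =>
      have := ih (n := m)
      rw [Walk.getVert_cons_succ]
      simpa [Walk.length_cons] using this

lemma getVert_dist_eq (hG : G.Connected) (p : G.Walk u v) (hp : p.length = G.dist u v)
    {n : ℕ} (hn : n ≤ p.length) : G.dist u (p.getVert n) = n := by
  have h1 := dist_getVert_le hG p hn
  have h2 := dist_getVert_end_le (p := p) (n := n)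
  have h3 := hG.dist_triangle (u := u) (v := p.getVert n) (w := v)
  omega

lemma dist_getVert_getVert_le (hG : G.Connected) (p : G.Walk u v)
    {i j : ℕ} (hij : i ≤ j) (hj : j ≤ p.length) :
    G.dist (p.getVert i) (p.getVert j) ≤ j - i := by
  induction j, hij using Nat.le_induction with
  | base => simp
  | succ m him ih =>
    have h2 : G.Adj (p.getVert m) (p.getVert (m + 1)) := p.adj_getVert_succ (by omega)
    have h1 := ih (by omega)
    have h3 := hG.dist_triangle (u := p.getVert i) (v := p.getVert m) (w := p.getVert (m + 1))
    have h4 := dist_le_one_of_adj h2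
    omega

lemma exists_getVert {w : V} (p : G.Walk u v) (hw : w ∈ p.support) :
    ∃ n, n ≤ p.length ∧ p.getVert n = w := by
  induction p with
  | nil =>
    simp only [Walk.support_nil, List.mem_singleton] at hw
    exact ⟨0, by simp, by simp [hw.symm]⟩
  | @cons a b c h q ih =>
    rw [Walk.support_cons, List.mem_cons] at hw
    rcases hw with rfl | hw
    · exact ⟨0, by simp, by simp⟩
    · obtain ⟨n, hn, hg⟩ := ih hw
      refine ⟨n + 1, by simp [Walk.length_cons]; omega, ?_⟩
      simpa [Walk.getVert_cons_succ] using hg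

lemma connected_induce_singleton (G : SimpleGraph V) (v : V) : (G.induce {v}).Connected := by
  rw [SimpleGraph.connected_iff]
  refine ⟨?_, ⟨⟨v, rfl⟩⟩⟩
  intro a b
  have ha : a = b := Subtype.ext (by
    have h1 := a.2; have h2 := b.2
    simp only [Set.mem_singleton_iff] at h1 h2
    rw [h1, h2])
  rw [ha]

end Dist

section Cluster

/-- The `ConnOutside`-class of `v` among vertices at the same level: the canonical
cluster containing `v`. -/
def Kcluster (G : SimpleGraph V) (r v : V) : Set V :=
  {u | G.dist r u = G.dist r v ∧ ConnOutside G {w | G.dist r w < G.dist r v} u v}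

variable {G : SimpleGraph V} {r : V}

lemma self_mem_Kcluster (G : SimpleGraph V) (r v : V) : v ∈ Kcluster G r v :=
  ⟨rfl, connOutside_refl (by simp)⟩

lemma isCluster_Kcluster {v : V} {k : ℕ} (h : G.dist r v = k) :
    IsCluster G r k (Kcluster G r v) := by
  subst h
  refine ⟨⟨v, self_mem_Kcluster G r v⟩, fun u hu => hu.1, fun u hu w hw =>
    connOutside_trans hu.2 (connOutside_symm hw.2), ?_⟩
  intro S' hsub hdist hconn u hu
  exact ⟨hdist u hu, hconn u hu v (hsub (self_mem_Kcluster G r v))⟩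

lemma parent_connOutside {k : ℕ} {S : Set V}
    (hS : IsCluster G r k S) {u u' : V}
    (hu : u ∈ parentSet G r k S) (hu' : u' ∈ parentSet G r k S) :
    ConnOutside G {w | G.dist r w < k - 1} u u' := by
  obtain ⟨hud, s, hsS, hadj⟩ := hu
  obtain ⟨hud', s', hsS', hadj'⟩ := hu'
  have h1 : ConnOutside G {w | G.dist r w < k} s s' := hS.2.2.1 s hsS s' hsS'
  have h2 : ConnOutside G {w | G.dist r w < k - 1} s s' :=
    connOutside_mono (fun a ha => by simp only [Set.mem_setOf_eq] at ha ⊢; omega) h1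
  have hucomp : u ∈ ({w | G.dist r w < k - 1} : Set V)ᶜ := by
    simp only [Set.mem_compl_iff, Set.mem_setOf_eq, hud]; omega
  have hucomp' : u' ∈ ({w | G.dist r w < k - 1} : Set V)ᶜ := by
    simp only [Set.mem_compl_iff, Set.mem_setOf_eq, hud']; omega
  have hscomp : s ∈ ({w | G.dist r w < k - 1} : Set V)ᶜ := by
    have hds := hS.2.1 s hsS
    simp only [Set.mem_compl_iff, Set.mem_setOf_eq, hds]; omega
  have h3 : ConnOutside G {w | G.dist r w < k - 1} u s :=
    connOutside_adj_right (connOutside_refl hucomp) hadj hscomp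
  have h4 := connOutside_trans h3 h2
  exact connOutside_adj_right h4 hadj'.symm hucomp'

lemma parentSet_subset_Kcluster {k : ℕ} {S : Set V}
    (hS : IsCluster G r k S) {u₀ : V} (hu₀ : u₀ ∈ parentSet G r k S) :
    parentSet G r k S ⊆ Kcluster G r u₀ := by
  intro w hw
  refine ⟨hw.1.trans hu₀.1.symm, ?_⟩
  have h := parent_connOutside hS hw hu₀
  have hfix : {x | G.dist r x < G.dist r u₀} = {x | G.dist r x < k - 1} := by
    rw [hu₀.1]
  rw [hfix]
  exact h

end Cluster
section Steps

variable {G H : SimpleGraph V} {r : V} {k : ℕ} {S : Set V} {E : Set (Sym2 V)}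

lemma sameSide {C D₁ D₂ : Set V} (hcov : ∀ c ∈ C, c ∈ D₁ ∪ D₂)
    (hnoadj : ¬ ∃ u ∈ D₁, ∃ v ∈ D₂, G.Adj u v)
    (hconn : (G.induce C).Connected) {a b : V} (ha : a ∈ C) (hb : b ∈ C)
    (haD : a ∈ D₁) : b ∈ D₁ := by
  have key : ∀ (x y : (C : Set V)), (G.induce C).Walk x y → x.1 ∈ D₁ → y.1 ∈ D₁ := by
    intro x y w
    induction w with
    | nil => exact id
    | @cons x' z' y' hadj q ih =>
      intro hx
      rcases hcov z'.1 z'.2 with hz | hz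
      · exact ih hz
      · exact absurd ⟨x'.1, hx, z'.1, hz, hadj⟩ hnoadj
  obtain ⟨w⟩ := hconn.preconnected ⟨a, ha⟩ ⟨b, hb⟩
  exact key _ _ w haD

lemma cover_mem {C₁ C₂ : Set V} (hun : C₁ ∪ C₂ = parentSet G r k S)
    (hpred : ∀ v ∈ S, ∃ u ∈ parentSet G r k S, G.Adj u v) {v : V} (hv : v ∈ S) :
    v ∈ Dset G S C₁ ∪ Dset G S C₂ := by
  obtain ⟨u, huP, hadj⟩ := hpred v hv
  rw [← hun] at huP
  rcases huP with h1 | h2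
  · exact Set.mem_union_left _ ⟨hv, u, h1, hadj.symm⟩
  · exact Set.mem_union_right _ ⟨hv, u, h2, hadj.symm⟩

lemma step_weak
    (hadjE : ∀ ⦃a b : V⦄, s(a, b) ∈ E → H.Adj a b)
    (hCE : ClusterEdges G S (parentSet G r k S) E)
    (hpred : ∀ v ∈ S, ∃ u ∈ parentSet G r k S, G.Adj u v)
    {τ : V} (hτ : τ ∈ S) :
    ∃ w ∈ parentSet G r k S, H.Adj τ w := by
  rcases hCE with ⟨hPconn, w, hwP, rfl⟩ | ⟨C₁, C₂, hsp, w₁, hw₁, w₂, hw₂, hrest⟩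
  · exact ⟨w, hwP, hadjE ⟨τ, hτ, rfl⟩⟩
  · obtain ⟨hun, hdisjC, hne₁, hne₂, hconn₁, hconn₂, hnoCC⟩ := hsp
    have hC₁P : C₁ ⊆ parentSet G r k S := hun ▸ Set.subset_union_left
    have hC₂P : C₂ ⊆ parentSet G r k S := hun ▸ Set.subset_union_right
    have hcovτ := cover_mem hun hpred hτ
    rcases hrest with ⟨hdd, hsub2⟩ | ⟨hnu, u, huDD, rfl⟩
    · rcases hsub2 with ⟨hno, rfl⟩ | ⟨u, huD1, vv, hvvD2, hadjuv, rfl⟩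
      · rcases hcovτ with h1 | h2
        · exact ⟨w₁, hC₁P hw₁, hadjE (Set.mem_union_left _ ⟨τ, h1, rfl⟩)⟩
        · exact ⟨w₂, hC₂P hw₂, hadjE (Set.mem_union_right _ ⟨τ, h2, rfl⟩)⟩
      · rcases hcovτ with h1 | h2
        · exact ⟨w₁, hC₁P hw₁,
            hadjE (Set.mem_union_left _ (Set.mem_union_left _ ⟨τ, h1, rfl⟩))⟩
        · exact ⟨w₂, hC₂P hw₂,
            hadjE (Set.mem_union_left _ (Set.mem_union_right _ ⟨τ, h2, rfl⟩))⟩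
    · by_cases hτ1 : τ ∈ Dset G S C₁
      · exact ⟨w₁, hC₁P hw₁,
          hadjE (Set.mem_union_left _ (Set.mem_union_left _ ⟨τ, hτ1, rfl⟩))⟩
      · have hτ2 : τ ∈ Dset G S C₂ := by
          rcases hcovτ with h | h
          · exact absurd h hτ1
          · exact h
        exact ⟨w₂, hC₂P hw₂,
          hadjE (Set.mem_union_left _ (Set.mem_union_right _ ⟨τ, ⟨hτ2, hτ1⟩, rfl⟩))⟩

lemma step_both
    (hadjE : ∀ ⦃a b : V⦄, s(a, b) ∈ E → H.Adj a b)
    (hCE : ClusterEdges G S (parentSet G r k S) E)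
    (hpred : ∀ v ∈ S, ∃ u ∈ parentSet G r k S, G.Adj u v)
    {τ σ b u₀ : V} {C : Set V}
    (hτ : τ ∈ S)
    (hC : C ⊆ S) (hconn : (G.induce C).Connected) (hσC : σ ∈ C) (hbC : b ∈ C)
    (hu₀ : u₀ ∈ parentSet G r k S) (hadj₀ : G.Adj u₀ b) :
    ∃ σ' C', σ' ∈ C' ∧ u₀ ∈ C' ∧ C' ⊆ parentSet G r k S ∧ (G.induce C').Connected ∧
      ((∃ w : H.Walk σ σ', w.length ≤ 1) ∨ (∃ w : H.Walk τ σ', w.length ≤ 4)) := by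
  rcases hCE with ⟨hPconn, w, hwP, rfl⟩ | ⟨C₁, C₂, hsp, w₁, hw₁, w₂, hw₂, hrest⟩
  · exact ⟨w, parentSet G r k S, hwP, hu₀, le_refl _, hPconn,
      Or.inl ⟨Walk.cons (hadjE ⟨σ, hC hσC, rfl⟩) Walk.nil, by simp⟩⟩
  · obtain ⟨hun, hdisjC, hne₁, hne₂, hconn₁, hconn₂, hnoCC⟩ := hsp
    have hC₁P : C₁ ⊆ parentSet G r k S := hun ▸ Set.subset_union_left
    have hC₂P : C₂ ⊆ parentSet G r k S := hun ▸ Set.subset_union_right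
    have hu₀' : u₀ ∈ C₁ ∪ C₂ := by rw [hun]; exact hu₀
    have hcovτ := cover_mem hun hpred hτ
    rcases hrest with ⟨hdd, hsub2⟩ | ⟨hnu, u, huDD, rfl⟩
    · rcases hsub2 with ⟨hno, rfl⟩ | ⟨u, huD1, vv, hvvD2, hadjuv, rfl⟩
      · -- case 2a : two stars, no cross edge
        rcases hu₀' with h1 | h2
        · have hbD : b ∈ Dset G S C₁ := ⟨hC hbC, u₀, h1, hadj₀.symm⟩
          have hσD : σ ∈ Dset G S C₁ :=
            sameSide (fun c hc => cover_mem hun hpred (hC hc)) hno hconn hbC hσC hbD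
          exact ⟨w₁, C₁, hw₁, h1, hC₁P, hconn₁,
            Or.inl ⟨Walk.cons (hadjE (Set.mem_union_left _ ⟨σ, hσD, rfl⟩)) Walk.nil, by simp⟩⟩
        · have hno' : ¬ ∃ a ∈ Dset G S C₂, ∃ c ∈ Dset G S C₁, G.Adj a c := by
            rintro ⟨a', ha', c', hc', hadj'⟩
            exact hno ⟨c', hc', a', ha', hadj'.symm⟩
          have hbD : b ∈ Dset G S C₂ := ⟨hC hbC, u₀, h2, hadj₀.symm⟩
          have hσD : σ ∈ Dset G S C₂ :=
            sameSide (fun c hc => by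
              have := cover_mem hun hpred (hC hc); rwa [Set.union_comm] at this)
              hno' hconn hbC hσC hbD
          exact ⟨w₂, C₂, hw₂, h2, hC₂P, hconn₂,
            Or.inl ⟨Walk.cons (hadjE (Set.mem_union_right _ ⟨σ, hσD, rfl⟩)) Walk.nil, by simp⟩⟩
      · -- case 2b : two stars plus one bridge edge
        have e_uw₁ : H.Adj u w₁ :=
          hadjE (Set.mem_union_left _ (Set.mem_union_left _ ⟨u, huD1, rfl⟩))
        have e_vw₂ : H.Adj vv w₂ :=
          hadjE (Set.mem_union_left _ (Set.mem_union_right _ ⟨vv, hvvD2, rfl⟩))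
        have e_uv : H.Adj u vv := hadjE (Set.mem_union_right _ rfl)
        rcases hu₀' with h1 | h2
        · refine ⟨w₁, C₁, hw₁, h1, hC₁P, hconn₁, Or.inr ?_⟩
          rcases hcovτ with hτ1 | hτ2
          · exact ⟨Walk.cons
              (hadjE (Set.mem_union_left _ (Set.mem_union_left _ ⟨τ, hτ1, rfl⟩)))
              Walk.nil, by simp⟩
          · exact ⟨Walk.cons
              (hadjE (Set.mem_union_left _ (Set.mem_union_right _ ⟨τ, hτ2, rfl⟩)))
              (Walk.cons e_vw₂.symm (Walk.cons e_uv.symm (Walk.cons e_uw₁ Walk.nil))), by simp⟩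
        · refine ⟨w₂, C₂, hw₂, h2, hC₂P, hconn₂, Or.inr ?_⟩
          rcases hcovτ with hτ1 | hτ2
          · exact ⟨Walk.cons
              (hadjE (Set.mem_union_left _ (Set.mem_union_left _ ⟨τ, hτ1, rfl⟩)))
              (Walk.cons e_uw₁.symm (Walk.cons e_uv (Walk.cons e_vw₂ Walk.nil))), by simp⟩
          · exact ⟨Walk.cons
              (hadjE (Set.mem_union_left _ (Set.mem_union_right _ ⟨τ, hτ2, rfl⟩)))
              Walk.nil, by simp⟩
    · -- case 3 : overlap vertex u
      have e_uw₁ : H.Adj u w₁ :=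
        hadjE (Set.mem_union_left _ (Set.mem_union_left _ ⟨u, huDD.1, rfl⟩))
      have e_uw₂ : H.Adj u w₂ := hadjE (Set.mem_union_right _ rfl)
      rcases hu₀' with h1 | h2
      · refine ⟨w₁, C₁, hw₁, h1, hC₁P, hconn₁, Or.inr ?_⟩
        by_cases hτ1 : τ ∈ Dset G S C₁
        · exact ⟨Walk.cons
            (hadjE (Set.mem_union_left _ (Set.mem_union_left _ ⟨τ, hτ1, rfl⟩)))
            Walk.nil, by simp⟩
        · have hτ2 : τ ∈ Dset G S C₂ := by
            rcases hcovτ with h | h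
            · exact absurd h hτ1
            · exact h
          exact ⟨Walk.cons
            (hadjE (Set.mem_union_left _ (Set.mem_union_right _ ⟨τ, ⟨hτ2, hτ1⟩, rfl⟩)))
            (Walk.cons e_uw₂.symm (Walk.cons e_uw₁ Walk.nil)), by simp⟩
      · refine ⟨w₂, C₂, hw₂, h2, hC₂P, hconn₂, Or.inr ?_⟩
        by_cases hτ1 : τ ∈ Dset G S C₁
        · exact ⟨Walk.cons
            (hadjE (Set.mem_union_left _ (Set.mem_union_left _ ⟨τ, hτ1, rfl⟩)))
            (Walk.cons e_uw₁.symm (Walk.cons e_uw₂ Walk.nil)), by simp⟩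
        · have hτ2 : τ ∈ Dset G S C₂ := by
            rcases hcovτ with h | h
            · exact absurd h hτ1
            · exact h
          exact ⟨Walk.cons
            (hadjE (Set.mem_union_left _ (Set.mem_union_right _ ⟨τ, ⟨hτ2, hτ1⟩, rfl⟩)))
            Walk.nil, by simp⟩

lemma merge_walk
    (hadjE : ∀ ⦃a b : V⦄, s(a, b) ∈ E → H.Adj a b)
    (hCE : ClusterEdges G S (parentSet G r k S) E)
    (hpred : ∀ v ∈ S, ∃ u ∈ parentSet G r k S, G.Adj u v)
    {a b : V} {C : Set V}
    (hC : C ⊆ S) (hconn : (G.induce C).Connected) (ha : a ∈ C) (hb : b ∈ C) :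
    ∃ w : H.Walk a b, w.length ≤ 5 := by
  rcases hCE with ⟨hPconn, w, hwP, rfl⟩ | ⟨C₁, C₂, hsp, w₁, hw₁, w₂, hw₂, hrest⟩
  · exact ⟨Walk.cons (hadjE ⟨a, hC ha, rfl⟩)
      (Walk.cons (hadjE ⟨b, hC hb, rfl⟩).symm Walk.nil), by simp⟩
  · obtain ⟨hun, hdisjC, hne₁, hne₂, hconn₁, hconn₂, hnoCC⟩ := hsp
    have hcova := cover_mem hun hpred (hC ha)
    have hcovb := cover_mem hun hpred (hC hb)
    rcases hrest with ⟨hdd, hsub2⟩ | ⟨hnu, u, huDD, rfl⟩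
    · rcases hsub2 with ⟨hno, rfl⟩ | ⟨u, huD1, vv, hvvD2, hadjuv, rfl⟩
      · -- 2a
        rcases hcova with h1 | h2
        · have hbD := sameSide (fun c hc => cover_mem hun hpred (hC hc)) hno hconn ha hb h1
          exact ⟨Walk.cons (hadjE (Set.mem_union_left _ ⟨a, h1, rfl⟩))
            (Walk.cons (hadjE (Set.mem_union_left _ ⟨b, hbD, rfl⟩)).symm Walk.nil), by simp⟩
        · have hno' : ¬ ∃ x ∈ Dset G S C₂, ∃ y ∈ Dset G S C₁, G.Adj x y := by
            rintro ⟨x', hx', y', hy', hadj'⟩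
            exact hno ⟨y', hy', x', hx', hadj'.symm⟩
          have hbD := sameSide (fun c hc => by
              have := cover_mem hun hpred (hC hc); rwa [Set.union_comm] at this)
            hno' hconn ha hb h2
          exact ⟨Walk.cons (hadjE (Set.mem_union_right _ ⟨a, h2, rfl⟩))
            (Walk.cons (hadjE (Set.mem_union_right _ ⟨b, hbD, rfl⟩)).symm Walk.nil), by simp⟩
      · -- 2b
        have e_uw₁ : H.Adj u w₁ :=
          hadjE (Set.mem_union_left _ (Set.mem_union_left _ ⟨u, huD1, rfl⟩))
        have e_vw₂ : H.Adj vv w₂ :=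
          hadjE (Set.mem_union_left _ (Set.mem_union_right _ ⟨vv, hvvD2, rfl⟩))
        have e_uv : H.Adj u vv := hadjE (Set.mem_union_right _ rfl)
        have ea1 : a ∈ Dset G S C₁ → H.Adj a w₁ := fun h =>
          hadjE (Set.mem_union_left _ (Set.mem_union_left _ ⟨a, h, rfl⟩))
        have ea2 : a ∈ Dset G S C₂ → H.Adj a w₂ := fun h =>
          hadjE (Set.mem_union_left _ (Set.mem_union_right _ ⟨a, h, rfl⟩))
        have eb1 : b ∈ Dset G S C₁ → H.Adj b w₁ := fun h =>
          hadjE (Set.mem_union_left _ (Set.mem_union_left _ ⟨b, h, rfl⟩))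
        have eb2 : b ∈ Dset G S C₂ → H.Adj b w₂ := fun h =>
          hadjE (Set.mem_union_left _ (Set.mem_union_right _ ⟨b, h, rfl⟩))
        rcases hcova with ha1 | ha2 <;> rcases hcovb with hb1 | hb2
        · exact ⟨Walk.cons (ea1 ha1) (Walk.cons (eb1 hb1).symm Walk.nil), by simp⟩
        · exact ⟨Walk.cons (ea1 ha1) (Walk.cons e_uw₁.symm (Walk.cons e_uv
            (Walk.cons e_vw₂ (Walk.cons (eb2 hb2).symm Walk.nil)))), by simp⟩
        · exact ⟨Walk.cons (ea2 ha2) (Walk.cons e_vw₂.symm (Walk.cons e_uv.symm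
            (Walk.cons e_uw₁ (Walk.cons (eb1 hb1).symm Walk.nil)))), by simp⟩
        · exact ⟨Walk.cons (ea2 ha2) (Walk.cons (eb2 hb2).symm Walk.nil), by simp⟩
    · -- case 3
      have e_uw₁ : H.Adj u w₁ :=
        hadjE (Set.mem_union_left _ (Set.mem_union_left _ ⟨u, huDD.1, rfl⟩))
      have e_uw₂ : H.Adj u w₂ := hadjE (Set.mem_union_right _ rfl)
      have ha2' : a ∉ Dset G S C₁ → a ∈ Dset G S C₂ := fun h => by
        rcases hcova with h' | h'
        · exact absurd h' h
        · exact h'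
      have hb2' : b ∉ Dset G S C₁ → b ∈ Dset G S C₂ := fun h => by
        rcases hcovb with h' | h'
        · exact absurd h' h
        · exact h'
      have ea1 : a ∈ Dset G S C₁ → H.Adj a w₁ := fun h =>
        hadjE (Set.mem_union_left _ (Set.mem_union_left _ ⟨a, h, rfl⟩))
      have eb1 : b ∈ Dset G S C₁ → H.Adj b w₁ := fun h =>
        hadjE (Set.mem_union_left _ (Set.mem_union_left _ ⟨b, h, rfl⟩))
      by_cases haD : a ∈ Dset G S C₁ <;> by_cases hbD : b ∈ Dset G S C₁
      · exact ⟨Walk.cons (ea1 haD) (Walk.cons (eb1 hbD).symm Walk.nil), by simp⟩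
      · have eb2 : H.Adj b w₂ := hadjE (Set.mem_union_left _
          (Set.mem_union_right _ ⟨b, ⟨hb2' hbD, hbD⟩, rfl⟩))
        exact ⟨Walk.cons (ea1 haD) (Walk.cons e_uw₁.symm
          (Walk.cons e_uw₂ (Walk.cons eb2.symm Walk.nil))), by simp⟩
      · have ea2 : H.Adj a w₂ := hadjE (Set.mem_union_left _
          (Set.mem_union_right _ ⟨a, ⟨ha2' haD, haD⟩, rfl⟩))
        exact ⟨Walk.cons ea2 (Walk.cons e_uw₂.symm
          (Walk.cons e_uw₁ (Walk.cons (eb1 hbD).symm Walk.nil))), by simp⟩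
      · have ea2 : H.Adj a w₂ := hadjE (Set.mem_union_left _
          (Set.mem_union_right _ ⟨a, ⟨ha2' haD, haD⟩, rfl⟩))
        have eb2 : H.Adj b w₂ := hadjE (Set.mem_union_left _
          (Set.mem_union_right _ ⟨b, ⟨hb2' hbD, hbD⟩, rfl⟩))
        exact ⟨Walk.cons ea2 (Walk.cons eb2.symm Walk.nil), by simp⟩

end Steps

theorem stmt13 {V : Type} [Fintype V] (G : SimpleGraph V) (hG : G.Connected)
    (hfree : K23Free G) (r : V) (H : SimpleGraph V) (hH : IsAlgoOutput G r H)
    (z : V) (p : G.Walk r z) (hp : p.length = G.dist r z)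
    (x y : V) (hx : x ∈ p.support) (hy : y ∈ p.support) :
    H.dist x y ≤ G.dist x y + 20 := by
  obtain ⟨f, hf, hfE⟩ := hH
  -- generic facts
  have hadjF : ∀ (S : Set V) (k : ℕ), 1 ≤ k → IsCluster G r k S →
      ∀ ⦃a b : V⦄, s(a, b) ∈ f S → H.Adj a b := by
    intro S k hk hS a b hab
    rw [← SimpleGraph.mem_edgeSet, hfE]
    exact Set.mem_biUnion ⟨k, hk, hS⟩ hab
  have hpredF : ∀ (S : Set V) (k : ℕ), 1 ≤ k → IsCluster G r k S →
      ∀ v ∈ S, ∃ u ∈ parentSet G r k S, G.Adj u v := by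
    intro S k hk hS v hv
    have hd : G.dist r v = k := hS.2.1 v hv
    obtain ⟨w, hw⟩ := hG.exists_walk_length_eq_dist r v
    have hlen : w.length = k := by rw [hw, hd]
    have hk1 : k - 1 < w.length := by omega
    have hadj : G.Adj (w.getVert (k - 1)) (w.getVert (k - 1 + 1)) := w.adj_getVert_succ hk1
    have hk2 : k - 1 + 1 = k := by omega
    rw [hk2] at hadj
    have hgv : w.getVert k = v := by
      have := w.getVert_length
      rwa [hlen] at this
    rw [hgv] at hadj
    have hdist : G.dist r (w.getVert (k - 1)) = k - 1 :=
      getVert_dist_eq hG w hw (by omega)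
    exact ⟨w.getVert (k - 1), ⟨hdist, v, hv, hadj⟩, hadj⟩
  -- the core statement for indices along p
  have core : ∀ i j : ℕ, i ≤ j → j ≤ p.length →
      H.dist (p.getVert i) (p.getVert j) ≤ G.dist (p.getVert i) (p.getVert j) + 20 := by
    intro i j hij hjp
    have hlev : ∀ ℓ, ℓ ≤ p.length → G.dist r (p.getVert ℓ) = ℓ := fun ℓ h =>
      getVert_dist_eq hG p hp h
    have hGxy : G.dist (p.getVert i) (p.getVert j) = j - i := by
      have h1 := dist_getVert_getVert_le hG p hij hjp
      have h2 := hG.dist_triangle (u := r) (v := p.getVert i) (w := p.getVert j)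
      have h3 := hlev i (le_trans hij hjp)
      have h4 := hlev j hjp
      omega
    have hqmem : ∀ ℓ, ℓ + 1 ≤ p.length →
        p.getVert ℓ ∈ parentSet G r (ℓ + 1) (Kcluster G r (p.getVert (ℓ + 1))) := by
      intro ℓ h
      refine ⟨by simpa using hlev ℓ (by omega), p.getVert (ℓ + 1),
        self_mem_Kcluster G r _, p.adj_getVert_succ (by omega)⟩
    -- descent
    have main : ∀ d ℓ, ℓ + d = j →
        ((∃ σ, σ ∈ Kcluster G r (p.getVert ℓ) ∧
            ∃ w : H.Walk (p.getVert j) σ, w.length ≤ d) ∧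
         (∃ σ C, σ ∈ C ∧ p.getVert ℓ ∈ C ∧ C ⊆ Kcluster G r (p.getVert ℓ) ∧
            (G.induce C).Connected ∧ ∃ w : H.Walk (p.getVert j) σ, w.length ≤ d + 3)) := by
      intro d
      induction d with
      | zero =>
        intro ℓ hℓ
        have : ℓ = j := by omega
        subst this
        refine ⟨⟨p.getVert ℓ, self_mem_Kcluster G r _, Walk.nil, by simp⟩,
          ⟨p.getVert ℓ, {p.getVert ℓ}, rfl, rfl, ?_, connected_induce_singleton G _,
            Walk.nil, by simp⟩⟩
        intro a ha
        have : a = p.getVert ℓ := ha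
        rw [this]
        exact self_mem_Kcluster G r _
      | succ d ih =>
        intro ℓ hℓ
        obtain ⟨⟨τ, hτ, wτ, hwτ⟩, ⟨σ, C, hσC, hbC, hCsub, hCconn, wσ, hwσ⟩⟩ :=
          ih (ℓ + 1) (by omega)
        have hℓ1p : ℓ + 1 ≤ p.length := by omega
        have hT : IsCluster G r (ℓ + 1) (Kcluster G r (p.getVert (ℓ + 1))) :=
          isCluster_Kcluster (hlev (ℓ + 1) hℓ1p)
        have hCE := hf _ (ℓ + 1) (by omega) hT
        have hadjE := hadjF _ (ℓ + 1) (by omega) hT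
        have hpred := hpredF _ (ℓ + 1) (by omega) hT
        have hu₀ := hqmem ℓ hℓ1p
        have hPsub : parentSet G r (ℓ + 1) (Kcluster G r (p.getVert (ℓ + 1))) ⊆
            Kcluster G r (p.getVert ℓ) := parentSet_subset_Kcluster hT hu₀
        constructor
        · obtain ⟨w', hw'P, hadjw'⟩ := step_weak hadjE hCE hpred hτ
          exact ⟨w', hPsub hw'P, wτ.concat hadjw', by
            rw [Walk.length_concat]; omega⟩
        · obtain ⟨σ', C', hσ'C', hu₀C', hC'P, hC'conn, halt⟩ :=
            step_both hadjE hCE hpred hτ hCsub hCconn hσC hbC hu₀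
              (p.adj_getVert_succ (by omega))
          refine ⟨σ', C', hσ'C', hu₀C', fun a ha => hPsub (hC'P ha), hC'conn, ?_⟩
          rcases halt with ⟨w1, hw1⟩ | ⟨w4, hw4⟩
          · exact ⟨wσ.append w1, by rw [Walk.length_append]; omega⟩
          · exact ⟨wτ.append w4, by rw [Walk.length_append]; omega⟩
    obtain ⟨-, σ, C, hσC, hxC, hCsub, hCconn, wσ, hwσ⟩ := main (j - i) i (by omega)
    by_cases hi0 : i = 0
    · -- x = r, and the strong invariant forces σ = r
      subst hi0
      have hσr : σ = p.getVert 0 := by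
        have h0 : G.dist r σ = 0 := by
          have hd := (hCsub hσC).1
          rw [hlev 0 (by omega)] at hd
          exact hd
        have hne : G.dist r σ ≠ 0 → False := fun h => h h0
        by_contra hne'
        obtain ⟨w0, hw0⟩ := hG.exists_walk_length_eq_dist r σ
        rw [h0] at hw0
        have : r = σ := Walk.eq_of_length_eq_zero hw0
        rw [p.getVert_zero] at hne'
        exact hne' this.symm
      have hle := SimpleGraph.dist_le (wσ.copy rfl hσr)
      rw [Walk.length_copy] at hle
      rw [SimpleGraph.dist_comm]
      omega
    · -- merge inside the cluster of p.getVert i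
      have hiP : i ≤ p.length := le_trans hij hjp
      have hTi : IsCluster G r i (Kcluster G r (p.getVert i)) :=
        isCluster_Kcluster (hlev i hiP)
      have hCEi := hf _ i (by omega) hTi
      obtain ⟨wm, hwm⟩ := merge_walk (hadjF _ i (by omega) hTi) hCEi
        (hpredF _ i (by omega) hTi) hCsub hCconn hσC hxC
      have hle := SimpleGraph.dist_le (wσ.append wm)
      rw [Walk.length_append] at hle
      rw [SimpleGraph.dist_comm]
      omega
  obtain ⟨i, hip, hxi⟩ := exists_getVert p hx
  obtain ⟨j, hjp, hyj⟩ := exists_getVert p hy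
  subst hxi; subst hyj
  rcases le_total i j with hij | hij
  · exact core i j hij hjp
  · have h := core j i hij hip
    rwa [SimpleGraph.dist_comm (G := H), SimpleGraph.dist_comm (G := G)] at h

end Paper
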